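/- Let κ be an uncountable regular cardinal with κ^{<κ} = κ, let S be a perfect level subset of Add(κ,1)², and let T be a strategic S-tree. Then player I has a winning strategy in the Banach–Mazur game G_κ(p[T]) of length κ with the projection p[T] as winning condition. -/

import Mathlib

universe u

noncomputable section

/-! ## Sequences of ordinals

`SeqLT o v` is the set `v^{<o}` of all sequences of ordinals `< v` of length `< o`
(for `o > 0`; values beyond the length are normalized to `0`).
`SeqFull o v` is the generalized Baire space `v^o` of all functions from ordinals `< o`
to ordinals `< v`. -/

/-- An element of `v^{<o}`: a sequence of ordinals `< v` of length `< o`. -/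
structure SeqLT (o v : Ordinal.{u}) : Type (u + 1) where
  len : Ordinal.{u}
  len_lt : len < o ⊔ 1
  val : Ordinal.{u} → Ordinal.{u}
  val_lt : ∀ β, β < len → val β < v
  val_zero : ∀ β, len ≤ β → val β = 0

namespace SeqLT

variable {o v : Ordinal.{u}}

/-- `s ⊆ t`, i.e. `t` end-extends `s`. -/
protected def le (s t : SeqLT o v) : Prop :=
  s.len ≤ t.len ∧ ∀ β, β < s.len → s.val β = t.val β

/-- `s ⊊ t`, i.e. `t` properly end-extends `s`. -/
protected def slt (s t : SeqLT o v) : Prop :=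
  s.le t ∧ s.len < t.len

/-- The empty sequence. -/
protected def empty (o v : Ordinal.{u}) : SeqLT o v where
  len := 0
  len_lt := lt_sup_iff.mpr (Or.inr zero_lt_one)
  val := fun _ => 0
  val_lt := fun β h => absurd h (not_lt_of_ge (show (0 : Ordinal.{u}) ≤ β from zero_le))
  val_zero := fun _ _ => rfl

/-- `s⌢⟨β⟩`: the sequence `s` extended by the single value `β`. -/
def snoc (s : SeqLT o v) (β : Ordinal.{u}) : SeqLT o v :=
  if h : s.len + 1 < o ⊔ 1 ∧ β < v then
    { len := s.len + 1
      len_lt := h.1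
      val := fun γ => if γ = s.len then β else s.val γ
      val_lt := fun γ hγ => by
        rcases eq_or_ne γ s.len with rfl | hne
        · simpa using h.2
        · simp only [if_neg hne]
          refine s.val_lt γ (lt_of_le_of_ne ?_ hne)
          rw [Ordinal.add_one_eq_succ] at hγ
          exact Order.lt_succ_iff.mp hγ
      val_zero := fun γ hγ => by
        have h1 : s.len < γ :=
          lt_of_lt_of_le (by rw [Ordinal.add_one_eq_succ]; exact Order.lt_succ s.len) hγ
        simp only [if_neg h1.ne']
        exact s.val_zero γ h1.le }
  else s

protected theorem le_refl (s : SeqLT o v) : s.le s :=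
  ⟨le_rfl, fun _ _ => rfl⟩

protected theorem le_trans {s t u : SeqLT o v} (h1 : s.le t) (h2 : t.le u) : s.le u :=
  ⟨h1.1.trans h2.1, fun β hβ => (h1.2 β hβ).trans (h2.2 β (lt_of_lt_of_le hβ h1.1))⟩

end SeqLT

/-- An element of the generalized Baire space `v^o`. -/
structure SeqFull (o v : Ordinal.{u}) : Type (u + 1) where
  val : Ordinal.{u} → Ordinal.{u}
  val_lt : ∀ β, β < o → val β < v
  val_zero : ∀ β, o ≤ β → val β = 0

/-- The restriction `x ↾ β` of `x : v^o` to an ordinal `β < o`. -/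
def SeqFull.res {o v : Ordinal.{u}} (x : SeqFull o v) (β : Ordinal.{u}) : SeqLT o v :=
  if h : β < o ⊔ 1 then
    { len := β
      len_lt := h
      val := fun γ => if γ < β then x.val γ else 0
      val_lt := fun γ hγ => by
        simp only [if_pos hγ]
        rcases lt_sup_iff.mp h with h' | h'
        · exact x.val_lt γ (hγ.trans h')
        · rw [Ordinal.lt_one_iff_zero] at h'
          exact absurd (h' ▸ hγ) (not_lt_of_ge (show (0 : Ordinal.{u}) ≤ γ from zero_le))
      val_zero := fun γ hγ => if_neg (not_lt.mpr hγ) }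
  else SeqLT.empty o v

/-- `s ⊆ x`: the sequence `s` is an initial segment of `x : v^o`. -/
def SeqLT.prefixOf {o v : Ordinal.{u}} (s : SeqLT o v) (x : SeqFull o v) : Prop :=
  ∀ β, β < s.len → s.val β = x.val β

/-! ## The bounded topology -/

/-- The basic open set `N_t`. -/
def basicOpen {o v : Ordinal.{u}} (t : SeqLT o v) : Set (SeqFull o v) :=
  {x | t.prefixOf x}

/-- The bounded (standard) topology on the generalized Baire space, generated by the
basic open sets `N_t`. -/
instance (o v : Ordinal.{u}) : TopologicalSpace (SeqFull o v) :=
  TopologicalSpace.generateFrom {U | ∃ t : SeqLT o v, U = basicOpen t}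

/-- `A` is a nowhere dense subset of `B` (in the subspace topology on `B`). -/
def NowhereDenseIn {o v : Ordinal.{u}} (A B : Set (SeqFull o v)) : Prop :=
  A ⊆ B ∧ interior (closure {x : ↥B | (x : SeqFull o v) ∈ A}) = ∅

/-- `A` is `o`-meager in `B`: `A ∩ B` is the union of (card of) `o` many nowhere dense
subsets of `B`. -/
def MeagerIn {o v : Ordinal.{u}} (A B : Set (SeqFull o v)) : Prop :=
  ∃ F : {β : Ordinal.{u} // β < o} → Set (SeqFull o v),
    (∀ i, NowhereDenseIn (F i) B) ∧ A ∩ B = ⋃ i, F i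

/-- `A` is comeager in `B`: `B \ A` is meager in `B`. -/
def ComeagerIn {o v : Ordinal.{u}} (A B : Set (SeqFull o v)) : Prop :=
  MeagerIn (B \ A) B

/-- `A` has the `o`-Baire property: for some open `U`, `A △ U` is meager. -/
def BaireSet {o v : Ordinal.{u}} (A : Set (SeqFull o v)) : Prop :=
  ∃ U : Set (SeqFull o v), IsOpen U ∧ MeagerIn (symmDiff A U) Set.univ

/-! ## Homomorphisms of `v^{<o}` -/

/-- A homomorphism: strictly extension-preserving map of `v^{<o}` to itself. -/
def IsHom {o v : Ordinal.{u}} (f : SeqLT o v → SeqLT o v) : Prop :=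
  ∀ s t : SeqLT o v, s.slt t → (f s).slt (f t)

/-- `f` is dense: for every `s` and every `t ⊇ f(s)` there is `β < v` with
`f(s⌢⟨β⟩) ⊇ t`. -/
def IsDenseMap {o v : Ordinal.{u}} (f : SeqLT o v → SeqLT o v) : Prop :=
  ∀ s t : SeqLT o v, (f s).le t → ∃ β, β < v ∧ t.le (f (s.snoc β))

/-- `u = ⋃_{α<γ} s α` for a chain `s`. -/
def IsUnionOfChain {o v : Ordinal.{u}} (u : SeqLT o v) (γ : Ordinal.{u})
    (s : Ordinal.{u} → SeqLT o v) : Prop :=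
  (∀ α, α < γ → (s α).le u) ∧ ∀ β, β < u.len → ∃ α, α < γ ∧ β < (s α).len

/-- `f` is continuous: for every limit `γ < o` and every strictly increasing sequence
`⟨s_α : α < γ⟩`, `f(⋃_{α<γ} s_α) = ⋃_{α<γ} f(s_α)`. -/
def IsContinuousMap {o v : Ordinal.{u}} (f : SeqLT o v → SeqLT o v) : Prop :=
  ∀ γ : Ordinal.{u}, Order.IsSuccLimit γ → γ < o →
    ∀ s : Ordinal.{u} → SeqLT o v, (∀ α β, α < β → β < γ → (s α).slt (s β)) →
      ∀ u : SeqLT o v, IsUnionOfChain u γ s → IsUnionOfChain (f u) γ fun α => f (s α)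

/-- `y = f*(x) = ⋃_{α<o} f(x↾α)` for a homomorphism `f`. -/
def FStarVal {o v : Ordinal.{u}} (f : SeqLT o v → SeqLT o v) (x y : SeqFull o v) : Prop :=
  (∀ α, α < o → (f (x.res α)).prefixOf y) ∧
    ∀ β, β < o → ∃ α, α < o ∧ β < (f (x.res α)).len

/-! ## Clubs and the almost Baire property -/

/-- `C` is a club (closed unbounded set) in the ordinal `o`. -/
def IsClubIn (C : Set Ordinal.{u}) (o : Ordinal.{u}) : Prop :=
  (∀ γ ∈ C, γ < o) ∧ (∀ β, β < o → ∃ γ ∈ C, β ≤ γ) ∧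
    ∀ β, β < o → 0 < β → (∀ γ, γ < β → ∃ ξ ∈ C, γ < ξ ∧ ξ < β) → β ∈ C

/-- The set of functions coding elements of the club filter as characteristic functions. -/
def ClSet (o v : Ordinal.{u}) : Set (SeqFull o v) :=
  {x | ∃ C : Set Ordinal.{u}, IsClubIn C o ∧ ∀ i ∈ C, x.val i ≠ 0}

/-- The set of functions coding elements of the nonstationary ideal. -/
def NsSet (o v : Ordinal.{u}) : Set (SeqFull o v) :=
  {x | ∃ C : Set Ordinal.{u}, IsClubIn C o ∧ ∀ i ∈ C, x.val i = 0}

/-- `A` is almost Baire: there is a dense homomorphism `f` with `ran f* ⊆ A`, or a dense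
continuous homomorphism `f` with `f ∅ = ∅` and `ran f* ⊆ Aᶜ`. -/
def AlmostBaire {o v : Ordinal.{u}} (A : Set (SeqFull o v)) : Prop :=
  ∃ f : SeqLT o v → SeqLT o v, IsHom f ∧ IsDenseMap f ∧
    ((∀ x y, FStarVal f x y → y ∈ A) ∨
      ((∀ x y, FStarVal f x y → y ∉ A) ∧ IsContinuousMap f ∧
        f (SeqLT.empty o v) = SeqLT.empty o v))

/-! ## Banach–Mazur games of length `o`

A run of the game is a strictly increasing sequence `⟨s_α : α < o⟩` in `v^{<o}`;
player I plays at even positions (`0` and limits count as even), player II at odd ones.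
In the game `G^t` the first move of player I must extend `t`; taking `t = ∅` gives the
plain Banach–Mazur game. -/

/-- `γ` is an even ordinal (`0` and limits are even). -/
def EvenOrd (γ : Ordinal.{u}) : Prop := ∃ δ : Ordinal.{u}, γ = 2 * δ

/-- `γ` is an odd ordinal. -/
def OddOrd (γ : Ordinal.{u}) : Prop := ∃ δ : Ordinal.{u}, γ = 2 * δ + 1

/-- The moves of a (partial) run, as a function on ordinals. -/
abbrev Play (o v : Ordinal.{u}) := Ordinal.{u} → SeqLT o v

/-- A strategy: given the length of the current position and the moves so far,
produce the next move. -/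
abbrev Strat (o v : Ordinal.{u}) := Ordinal.{u} → Play o v → SeqLT o v

/-- `p` is a legal partial run of length `γ` of the game `G^t`: strictly increasing moves,
the first move extends `t`, and the moves beyond `γ` are normalized to `∅`. -/
def IsPos {o v : Ordinal.{u}} (t : SeqLT o v) (p : Play o v) (γ : Ordinal.{u}) : Prop :=
  (∀ α β, α < β → β < γ → (p α).slt (p β)) ∧ (0 < γ → t.le (p 0)) ∧
    ∀ α, γ ≤ α → p α = SeqLT.empty o v

/-- The restriction of a run to its first `γ` moves. -/
def resPlay {o v : Ordinal.{u}} (p : Play o v) (γ : Ordinal.{u}) : Play o v :=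
  fun α => if α < γ then p α else SeqLT.empty o v

/-- `m` is a legal move at the position `p` of length `γ` in the game `G^t`. -/
def MoveOK {o v : Ordinal.{u}} (t : SeqLT o v) (p : Play o v) (γ : Ordinal.{u})
    (m : SeqLT o v) : Prop :=
  (∀ α, α < γ → (p α).slt m) ∧ (γ = 0 → t.le m)

/-- `σ` is a strategy for player I in `G^t`: it assigns a legal move to every legal
position of even length. -/
def LegalI {o v : Ordinal.{u}} (t : SeqLT o v) (σ : Strat o v) : Prop :=
  ∀ γ, γ < o → EvenOrd γ → ∀ p, IsPos t p γ → MoveOK t p γ (σ γ p)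

/-- `σ` is a strategy for player II in `G^t`: it assigns a legal move to every legal
position of odd length. -/
def LegalII {o v : Ordinal.{u}} (t : SeqLT o v) (σ : Strat o v) : Prop :=
  ∀ γ, γ < o → OddOrd γ → ∀ p, IsPos t p γ → MoveOK t p γ (σ γ p)

/-- The first `γ` moves of `p` follow the strategy `σ` of player I. -/
def FollowsI {o v : Ordinal.{u}} (σ : Strat o v) (p : Play o v) (γ : Ordinal.{u}) : Prop :=
  ∀ α, α < γ → EvenOrd α → p α = σ α (resPlay p α)

/-- The first `γ` moves of `p` follow the strategy `σ` of player II. -/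
def FollowsII {o v : Ordinal.{u}} (σ : Strat o v) (p : Play o v) (γ : Ordinal.{u}) : Prop :=
  ∀ α, α < γ → OddOrd α → p α = σ α (resPlay p α)

/-- `x = ⋃_{α<o} p α` is the outcome of the complete run `p`. -/
def IsOutcome {o v : Ordinal.{u}} (p : Play o v) (x : SeqFull o v) : Prop :=
  (∀ α, α < o → (p α).prefixOf x) ∧ ∀ β, β < o → ∃ α, α < o ∧ β < (p α).len

/-- Player I has a winning strategy in the Banach–Mazur game `G^t(A)` of length `o`. -/
def WinIStrat {o v : Ordinal.{u}} (t : SeqLT o v) (A : Set (SeqFull o v)) : Prop :=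
  ∃ σ : Strat o v, LegalI t σ ∧
    ∀ p : Play o v, IsPos t p o → FollowsI σ p o → ∃ x, IsOutcome p x ∧ x ∈ A

/-- Player II has a winning strategy in the Banach–Mazur game `G^t(A)` of length `o`. -/
def WinIIStrat {o v : Ordinal.{u}} (t : SeqLT o v) (A : Set (SeqFull o v)) : Prop :=
  ∃ σ : Strat o v, LegalII t σ ∧
    ∀ p : Play o v, IsPos t p o → FollowsII σ p o → ∃ x, IsOutcome p x ∧ x ∉ A

/-- `σ` is a tactic for player II: its moves depend only on the union of the previous moves. -/
def IsTacticII {o v : Ordinal.{u}} (t : SeqLT o v) (σ : Strat o v) : Prop :=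
  ∃ f : SeqLT o v → SeqLT o v, ∀ γ, γ < o → OddOrd γ → ∀ p, IsPos t p γ →
    ∀ u, IsUnionOfChain u γ p → σ γ p = f u

/-- Player II has a winning tactic in the Banach–Mazur game `G^t(A)` of length `o`. -/
def WinIITactic {o v : Ordinal.{u}} (t : SeqLT o v) (A : Set (SeqFull o v)) : Prop :=
  ∃ σ : Strat o v, LegalII t σ ∧ IsTacticII t σ ∧
    ∀ p : Play o v, IsPos t p o → FollowsII σ p o → ∃ x, IsOutcome p x ∧ x ∉ A

/-! ## Trees and perfect sets -/

/-- A subtree of `v^{<o}`: a downwards closed set of sequences. -/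
def IsSubtree {o v : Ordinal.{u}} (T : Set (SeqLT o v)) : Prop :=
  ∀ s ∈ T, ∀ r : SeqLT o v, r.le s → r ∈ T

/-- `T` is closed: every strictly increasing sequence in `T` of length `< o` has an
upper bound in `T`. -/
def TreeClosed {o v : Ordinal.{u}} (T : Set (SeqLT o v)) : Prop :=
  ∀ γ : Ordinal.{u}, γ < o → ∀ s : Ordinal.{u} → SeqLT o v,
    (∀ α β, α < β → β < γ → (s α).slt (s β)) → (∀ α, α < γ → s α ∈ T) →
      ∃ b ∈ T, ∀ α, α < γ → (s α).le b

/-- `t` is a direct successor of `s`. -/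
def IsDirectSucc {o v : Ordinal.{u}} (s t : SeqLT o v) : Prop :=
  s.slt t ∧ t.len = s.len + 1

/-- `T` is a perfect tree: a (nonempty) closed subtree whose splitting nodes are cofinal. -/
def IsPerfectTree {o v : Ordinal.{u}} (T : Set (SeqLT o v)) : Prop :=
  T.Nonempty ∧ IsSubtree T ∧ TreeClosed T ∧
    ∀ s ∈ T, ∃ t ∈ T, s.le t ∧
      ∃ t₁ ∈ T, ∃ t₂ ∈ T, IsDirectSucc t t₁ ∧ IsDirectSucc t t₂ ∧ t₁ ≠ t₂

/-- The body `[T]` of a tree `T`: the set of branches of length `o` through `T`. -/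
def treeBody {o v : Ordinal.{u}} (T : Set (SeqLT o v)) : Set (SeqFull o v) :=
  {x | ∀ α, α < o → x.res α ∈ T}

/-- A sequence of elements of `o^{<o}` of length `< o` (values beyond the length are
normalized to the empty sequence). -/
structure SeqSeq (o : Ordinal.{u}) : Type (u + 1) where
  len : Ordinal.{u}
  len_lt : len < o ⊔ 1
  val : Ordinal.{u} → SeqLT o o
  val_empty : ∀ β, len ≤ β → val β = SeqLT.empty o o

namespace SeqSeq

variable {o : Ordinal.{u}}

/-- The restriction `s ↾ α`. -/
def res (s : SeqSeq o) (α : Ordinal.{u}) : SeqSeq o :=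
  if h : α < o ⊔ 1 then
    { len := α
      len_lt := h
      val := fun β => if β < α then s.val β else SeqLT.empty o o
      val_empty := fun β hβ => if_neg (not_lt.mpr hβ) }
  else s

/-- The sequence of length `γ` with values given by `f`. -/
def ofFun (o : Ordinal.{u}) (γ : Ordinal.{u}) (f : Ordinal.{u} → SeqLT o o) : SeqSeq o :=
  if h : γ < o ⊔ 1 then
    { len := γ
      len_lt := h
      val := fun β => if β < γ then f β else SeqLT.empty o o
      val_empty := fun β hβ => if_neg (not_lt.mpr hβ) }
  else
    { len := 0
      len_lt := lt_sup_iff.mpr (Or.inr zero_lt_one)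
      val := fun _ => SeqLT.empty o o
      val_empty := fun _ _ => rfl }

/-- `s` is an initial segment of `t`. -/
protected def le (s t : SeqSeq o) : Prop :=
  s.len ≤ t.len ∧ ∀ β, β < s.len → s.val β = t.val β

/-- The sequence `s` extended by the single value `m`. -/
def snoc (s : SeqSeq o) (m : SeqLT o o) : SeqSeq o :=
  if h : s.len + 1 < o ⊔ 1 then
    { len := s.len + 1
      len_lt := h
      val := fun β => if β = s.len then m else s.val β
      val_empty := fun β hβ => by
        have h1 : s.len < β :=
          lt_of_lt_of_le (by rw [Ordinal.add_one_eq_succ]; exact Order.lt_succ s.len) hβ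
        simp only [if_neg h1.ne']
        exact s.val_empty β h1.le }
  else s

end SeqSeq

/-- A level subset of `Add(κ,1)²`: a set of pairs `(s,t)` with `dom s = dom t`. -/
def IsLevelSubset {o : Ordinal.{u}} (S : Set (SeqLT o o × SeqLT o o)) : Prop :=
  ∀ q ∈ S, q.1.len = q.2.len

/-- `S` is closed: every strictly increasing sequence in `S` of length `< o` has an
upper bound in `S`. -/
def LevelClosed {o : Ordinal.{u}} (S : Set (SeqLT o o × SeqLT o o)) : Prop :=
  ∀ γ : Ordinal.{u}, γ < o → ∀ c : Ordinal.{u} → SeqLT o o × SeqLT o o,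
    (∀ α β, α < β → β < γ → (c α).1.slt (c β).1 ∧ (c α).2.slt (c β).2) →
    (∀ α, α < γ → c α ∈ S) →
      ∃ q ∈ S, ∀ α, α < γ → (c α).1.le q.1 ∧ (c α).2.le q.2

/-- Two pairs are compatible if some pair of sequences extends both coordinatewise. -/
def PairCompat {o : Ordinal.{u}} (q₁ q₂ : SeqLT o o × SeqLT o o) : Prop :=
  ∃ w₁ w₂ : SeqLT o o, q₁.1.le w₁ ∧ q₂.1.le w₁ ∧ q₁.2.le w₂ ∧ q₂.2.le w₂

/-- `S` is a perfect level subset: closed, and every element has two incompatible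
extensions in `S`. -/
def LevelPerfect {o : Ordinal.{u}} (S : Set (SeqLT o o × SeqLT o o)) : Prop :=
  LevelClosed S ∧ ∀ q ∈ S, ∃ q₁ ∈ S, ∃ q₂ ∈ S,
    (q.1.le q₁.1 ∧ q.2.le q₁.2) ∧ (q.1.le q₂.1 ∧ q.2.le q₂.2) ∧ ¬PairCompat q₁ q₂

/-- `⋃ ran (s↾γ) = ⋃ ran (u↾δ)` for chains `s`, `u`: the unions of the two chains agree
as partial functions. -/
def chainUnionEq {o : Ordinal.{u}} (γ : Ordinal.{u}) (s : Ordinal.{u} → SeqLT o o)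
    (δ : Ordinal.{u}) (u : Ordinal.{u} → SeqLT o o) : Prop :=
  (∀ β, (∃ α, α < γ ∧ β < (s α).len) ↔ ∃ α, α < δ ∧ β < (u α).len) ∧
    ∀ α β, α < γ → β < δ → ∀ ξ, ξ < (s α).len → ξ < (u β).len →
      (s α).val ξ = (u β).val ξ

/-- `T` is an `S`-tree. -/
def IsSTree {o : Ordinal.{u}} (S : Set (SeqLT o o × SeqLT o o))
    (T : Set (SeqSeq o × SeqSeq o)) : Prop :=
  (∀ p ∈ T,
    p.1.len = p.2.len ∧
    (∀ α β, α < β → β < p.1.len →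
      (p.1.val α).slt (p.1.val β) ∧ (p.2.val α).slt (p.2.val β)) ∧
    (∀ α, α < p.1.len → (p.1.val α, p.2.val α) ∈ S) ∧
    ∀ α, α < p.1.len → (p.1.res α, p.2.res α) ∈ T) ∧
  ∀ p ∈ T, ∀ q ∈ T, ∀ γ δ : Ordinal.{u}, EvenOrd γ → EvenOrd δ →
    γ < p.1.len → δ < q.1.len →
    chainUnionEq γ p.1.val δ q.1.val → chainUnionEq γ p.2.val δ q.2.val →
    p.1.val γ = q.1.val δ ∧ p.2.val γ = q.2.val δ

/-- The coordinatewise extension order on pairs of sequences. -/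
def pairLe {o : Ordinal.{u}} (p q : SeqSeq o × SeqSeq o) : Prop :=
  p.1.le q.1 ∧ p.2.le q.2

/-- `T` is superclosed: every strictly increasing sequence in `T` of length `< o` has an
upper bound in `T`, and `T` has no maximal elements. -/
def Superclosed {o : Ordinal.{u}} (T : Set (SeqSeq o × SeqSeq o)) : Prop :=
  (∀ γ : Ordinal.{u}, γ < o → ∀ c : Ordinal.{u} → SeqSeq o × SeqSeq o,
    (∀ α β, α < β → β < γ → pairLe (c α) (c β) ∧ c α ≠ c β) →
    (∀ α, α < γ → c α ∈ T) → ∃ q ∈ T, ∀ α, α < γ → pairLe (c α) q) ∧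
  ∀ p ∈ T, ∃ q ∈ T, pairLe p q ∧ p ≠ q

/-- `T` is a strategic `S`-tree. -/
def StrategicTree {o : Ordinal.{u}} (T : Set (SeqSeq o × SeqSeq o)) : Prop :=
  Superclosed T ∧
    ∀ p ∈ T, ∀ γ : Ordinal.{u}, EvenOrd γ → p.1.len = γ + 1 →
      ∀ u : SeqLT o o, (p.1.val γ).slt u →
        ∃ w₁ w₂ : SeqLT o o, u.le w₁ ∧ (p.1.snoc w₁, p.2.snoc w₂) ∈ T

/-- The projection `p[T]` of a superclosed `S`-tree `T`. -/
def projTree {o : Ordinal.{u}} (T : Set (SeqSeq o × SeqSeq o)) : Set (SeqFull o o) :=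
  {x | ∃ s t : Ordinal.{u} → SeqLT o o,
    (∀ γ, γ < o → (SeqSeq.ofFun o γ s, SeqSeq.ofFun o γ t) ∈ T) ∧
    (∀ α, α < o → (s α).prefixOf x) ∧ ∀ β, β < o → ∃ α, α < o ∧ β < (s α).len}

/-!
Player I plays along the strategic tree `T`. At every stage `γ < κ` of the run he keeps a node
of `T` of length `γ + 1` extending all earlier ones, and at even stages he plays the last entry
of its first coordinate. After a move of player II, strategicity of `T` yields a next node whose
last entry extends that move; at all other stages superclosedness of `T` yields a node above all
earlier ones. The first and second coordinates of these nodes then witness that the outcome of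
the run lies in `p[T]`.
-/

open Ordinal Order

namespace SeqLT

variable {o v : Ordinal.{u}}

theorem len_le (s : SeqLT o v) : s.len ≤ o := by
  rcases lt_sup_iff.1 s.len_lt with h | h
  · exact h.le
  · rw [Order.lt_one_iff.1 h]
    exact zero_le

theorem empty_le (s : SeqLT o v) : (SeqLT.empty o v).le s :=
  ⟨zero_le, fun _ h => absurd h (not_lt_of_ge zero_le)⟩

theorem slt_of_le_of_slt {s t w : SeqLT o v} (h₁ : s.le t) (h₂ : t.slt w) : s.slt w :=
  ⟨SeqLT.le_trans h₁ h₂.1, h₁.1.trans_lt h₂.2⟩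

end SeqLT

namespace SeqSeq

variable {o : Ordinal.{u}}

instance : Inhabited (SeqSeq o) := ⟨ofFun o 0 fun _ => SeqLT.empty o o⟩

theorem ext {s t : SeqSeq o} (hlen : s.len = t.len) (hval : s.val = t.val) : s = t := by
  cases s; cases t; cases hlen; cases hval; rfl

protected theorem le_trans {s t w : SeqSeq o} (h₁ : s.le t) (h₂ : t.le w) : s.le w :=
  ⟨h₁.1.trans h₂.1, fun β hβ => (h₁.2 β hβ).trans (h₂.2 β (hβ.trans_le h₁.1))⟩

theorem eq_of_le_of_len_eq {s t : SeqSeq o} (h : s.le t) (hlen : s.len = t.len) : s = t := by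
  refine ext hlen (funext fun β => ?_)
  rcases lt_or_ge β s.len with hβ | hβ
  · exact h.2 β hβ
  · rw [s.val_empty β hβ, t.val_empty β (hlen ▸ hβ)]

theorem res_len (s : SeqSeq o) {α : Ordinal.{u}} (hα : α < o ⊔ 1) : (s.res α).len = α := by
  simp only [res, dif_pos hα]

theorem res_val_of_lt (s : SeqSeq o) {α β : Ordinal.{u}} (hα : α < o ⊔ 1) (hβ : β < α) :
    (s.res α).val β = s.val β := by
  simp only [res, dif_pos hα, if_pos hβ]

theorem res_len_self (s : SeqSeq o) : s.res s.len = s :=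
  eq_of_le_of_len_eq ⟨(s.res_len s.len_lt).le, fun _ hβ =>
    s.res_val_of_lt s.len_lt (hβ.trans_eq (s.res_len s.len_lt))⟩ (s.res_len s.len_lt)

theorem le_res {s t : SeqSeq o} (h : s.le t) {α : Ordinal.{u}} (hs : s.len ≤ α)
    (hα : α < o ⊔ 1) : s.le (t.res α) :=
  ⟨hs.trans_eq (t.res_len hα).symm, fun β hβ =>
    (h.2 β hβ).trans (t.res_val_of_lt hα (hβ.trans_le hs)).symm⟩

theorem ofFun_eq_res {f : Ordinal.{u} → SeqLT o o} {s : SeqSeq o} {γ : Ordinal.{u}}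
    (hγ : γ < o ⊔ 1) (hf : ∀ β < γ, f β = s.val β) : ofFun o γ f = s.res γ := by
  refine ext (by simp only [ofFun, res, dif_pos hγ]) (funext fun β => ?_)
  simp only [ofFun, res, dif_pos hγ]
  split_ifs with hβ
  · exact hf β hβ
  · rfl

variable {s : SeqSeq o} {m : SeqLT o o}

theorem snoc_len (h : s.len + 1 < o ⊔ 1) : (s.snoc m).len = s.len + 1 := by
  simp only [snoc, dif_pos h]

theorem snoc_val_len (h : s.len + 1 < o ⊔ 1) : (s.snoc m).val s.len = m := by
  simp only [snoc, dif_pos h, if_true]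

theorem le_snoc (h : s.len + 1 < o ⊔ 1) : s.le (s.snoc m) := by
  refine ⟨(snoc_len h).symm ▸ (lt_add_one s.len).le, fun β hβ => ?_⟩
  simp only [snoc, dif_pos h, if_neg hβ.ne]

end SeqSeq

theorem pairLe.trans {o : Ordinal.{u}} {a b c : SeqSeq o × SeqSeq o} (h₁ : pairLe a b)
    (h₂ : pairLe b c) : pairLe a c :=
  ⟨SeqSeq.le_trans h₁.1 h₂.1, SeqSeq.le_trans h₁.2 h₂.2⟩

theorem evenOrd_iff_mod_two {a : Ordinal.{u}} : EvenOrd a ↔ a % 2 = 0 :=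
  Ordinal.dvd_iff_mod_eq_zero

theorem evenOrd_of_isSuccPrelimit {a : Ordinal.{u}} (h : IsSuccPrelimit a) : EvenOrd a :=
  dvd_trans ⟨ω, (natCast_mul_omega0 two_pos).symm⟩ (isSuccPrelimit_iff_omega0_dvd.1 h)

theorem evenOrd_add_one_iff {a : Ordinal.{u}} : EvenOrd (a + 1) ↔ ¬EvenOrd a := by
  have hmod : (a + 1) % 2 = (a % 2 + 1) % 2 := by
    conv_lhs => rw [← div_add_mod a 2, add_assoc, mul_add_mod_self]
  have h2 : a % 2 < 1 + 1 := by rw [one_add_one_eq_two]; exact mod_lt a two_ne_zero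
  rw [evenOrd_iff_mod_two, evenOrd_iff_mod_two, hmod]
  rcases Order.le_one_iff.1 (Order.lt_add_one_iff.1 h2) with h | h <;> rw [h]
  · simp [mod_eq_of_lt (one_lt_two (α := Ordinal))]
  · simp [one_add_one_eq_two]

theorem exists_eq_add_one_of_not_evenOrd {a : Ordinal.{u}} (h : ¬EvenOrd a) :
    ∃ b, a = b + 1 ∧ EvenOrd b := by
  rcases zero_or_succ_or_isSuccLimit a with rfl | ⟨b, rfl⟩ | hl
  · exact absurd ⟨0, by simp⟩ h
  · rw [succ_eq_add_one, evenOrd_add_one_iff, not_not] at h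
    exact ⟨b, succ_eq_add_one b, h⟩
  · exact absurd (evenOrd_of_isSuccPrelimit hl.isSuccPrelimit) h

namespace IsSTree

variable {o : Ordinal.{u}} {S : Set (SeqLT o o × SeqLT o o)} {T : Set (SeqSeq o × SeqSeq o)}
  {q : SeqSeq o × SeqSeq o}

theorem len_eq (hT : IsSTree S T) (hq : q ∈ T) : q.1.len = q.2.len :=
  (hT.1 q hq).1

theorem val_slt (hT : IsSTree S T) (hq : q ∈ T) {α β : Ordinal.{u}} (hαβ : α < β)
    (hβ : β < q.1.len) : (q.1.val α).slt (q.1.val β) :=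
  ((hT.1 q hq).2.1 α β hαβ hβ).1

theorem res_mem (hT : IsSTree S T) (hq : q ∈ T) {α : Ordinal.{u}} (hα : α ≤ q.1.len) :
    (q.1.res α, q.2.res α) ∈ T := by
  rcases hα.lt_or_eq with hα | rfl
  · exact (hT.1 q hq).2.2.2 α hα
  · rwa [q.1.res_len_self, hT.len_eq hq, q.2.res_len_self]

theorem exists_len_gt (hT : IsSTree S T) (hsc : Superclosed T) (hq : q ∈ T) :
    ∃ r ∈ T, pairLe q r ∧ q.1.len < r.1.len := by
  obtain ⟨r, hr, hqr, hne⟩ := hsc.2 q hq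
  refine ⟨r, hr, hqr, hqr.1.1.lt_of_ne fun hlen => hne ?_⟩
  have hlen₂ : q.2.len = r.2.len := by rw [← hT.len_eq hq, ← hT.len_eq hr, hlen]
  exact Prod.ext (SeqSeq.eq_of_le_of_len_eq hqr.1 hlen) (SeqSeq.eq_of_le_of_len_eq hqr.2 hlen₂)

theorem exists_len_eq_add_one_of_chain (hT : IsSTree S T) (hsc : Superclosed T) {γ : Ordinal.{u}}
    (hγ : γ < o) (c : Ordinal.{u} → SeqSeq o × SeqSeq o)
    (hc : ∀ α < γ, c α ∈ T ∧ (c α).1.len = α + 1)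
    (hmono : ∀ α β, α < β → β < γ → pairLe (c α) (c β)) :
    ∃ q ∈ T, q.1.len = γ + 1 ∧ ∀ α < γ, pairLe (c α) q := by
  have hne : ∀ α β, α < β → β < γ → c α ≠ c β := fun α β hαβ hβ h =>
    hαβ.ne (by simpa [(hc α (hαβ.trans hβ)).2, (hc β hβ).2] using congrArg (·.1.len) h)
  obtain ⟨q₀, hq₀, hub⟩ := hsc.1 γ hγ c (fun α β hαβ hβ => ⟨hmono α β hαβ hβ, hne α β hαβ hβ⟩)
    fun α hα => (hc α hα).1
  have hγq₀ : γ ≤ q₀.1.len := le_of_forall_lt fun α hα =>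
    (lt_add_one α).trans_le ((hc α hα).2 ▸ (hub α hα).1.1)
  obtain ⟨q₁, hq₁, hq₀₁, hlen⟩ := hT.exists_len_gt hsc hq₀
  have hγq₁ : γ + 1 ≤ q₁.1.len := add_one_le_iff.2 (hγq₀.trans_lt hlen)
  have hγo : γ + 1 < o ⊔ 1 := hγq₁.trans_lt q₁.1.len_lt
  refine ⟨_, hT.res_mem hq₁ hγq₁, q₁.1.res_len hγo, fun α hα => ?_⟩
  have hαγ : α + 1 ≤ γ + 1 := add_le_add_left hα.le 1
  have hαq₁ := (hub α hα).trans hq₀₁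
  refine ⟨SeqSeq.le_res hαq₁.1 ((hc α hα).2.trans_le hαγ) hγo, SeqSeq.le_res hαq₁.2 ?_ hγo⟩
  rw [← hT.len_eq (hc α hα).1, (hc α hα).2]
  exact hαγ

end IsSTree

section Runs

variable {o v : Ordinal.{u}} {c d : Play o v} {γ : Ordinal.{u}}

theorem le_len_of_chain (hc : ∀ α β, α < β → β < γ → (c α).slt (c β)) :
    ∀ α < γ, α ≤ (c α).len := by
  intro α
  induction α using WellFoundedLT.induction with
  | _ α IH =>
    intro hα
    by_contra! h
    exact (IH _ h (h.trans hα)).not_gt (hc _ α h hα).2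

theorem exists_lt_len_of_chain (hlim : IsSuccLimit o)
    (hc : ∀ α β, α < β → β < o → (c α).slt (c β)) : ∀ β < o, ∃ α < o, β < (c α).len :=
  fun β hβ => ⟨β + 1, hlim.add_one_lt hβ,
    (lt_add_one β).trans_le (le_len_of_chain hc _ (hlim.add_one_lt hβ))⟩

theorem exists_union_of_chain (hv : 0 < v) (hc : ∀ α β, α < β → β < γ → (c α).le (c β)) :
    ∃ F : Ordinal.{u} → Ordinal.{u}, (∀ α < γ, ∀ β < (c α).len, (c α).val β = F β) ∧
      (∀ β, F β < v) ∧ ∀ β, (∀ α < γ, (c α).len ≤ β) → F β = 0 := by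
  classical
  refine ⟨fun β => if h : ∃ α < γ, β < (c α).len then (c h.choose).val β else 0, ?_, ?_, ?_⟩
  · intro α hα β hβ
    have h : ∃ α < γ, β < (c α).len := ⟨α, hα, hβ⟩
    dsimp only
    rw [dif_pos h]
    rcases lt_trichotomy h.choose α with hlt | heq | hgt
    · exact ((hc _ _ hlt hα).2 β h.choose_spec.2).symm
    · rw [heq]
    · exact (hc _ _ hgt h.choose_spec.1).2 β hβ
  · intro β
    dsimp only
    split_ifs with h
    · exact (c h.choose).val_lt β h.choose_spec.2
    · exact hv
  · intro β hβ
    dsimp only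
    rw [dif_neg]
    rintro ⟨α, hα, hlt⟩
    exact (hβ α hα).not_gt hlt

theorem exists_forall_slt_of_chain (hv : 0 < v) (hc : ∀ α β, α < β → β < γ → (c α).le (c β))
    {ℓ : Ordinal.{u}} (hℓ : ∀ α < γ, (c α).len ≤ ℓ) (hℓo : ℓ + 1 < o ⊔ 1) :
    ∃ m : SeqLT o v, ∀ α < γ, (c α).slt m := by
  obtain ⟨F, hFc, hFv, hF0⟩ := exists_union_of_chain hv hc
  refine ⟨⟨ℓ + 1, hℓo, F, fun β _ => hFv β, fun β hβ => hF0 β fun α hα =>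
    (hℓ α hα).trans ((lt_add_one ℓ).le.trans hβ)⟩, fun α hα => ?_⟩
  exact ⟨⟨(hℓ α hα).trans (lt_add_one ℓ).le, hFc α hα⟩, (hℓ α hα).trans_lt (lt_add_one ℓ)⟩

theorem exists_isOutcome (hlim : IsSuccLimit o) (hv : 0 < v)
    (hc : ∀ α β, α < β → β < o → (c α).slt (c β)) : ∃ x, IsOutcome c x := by
  obtain ⟨F, hFc, hFv, hF0⟩ := exists_union_of_chain hv fun α β h h' => (hc α β h h').1
  exact ⟨⟨F, fun β _ => hFv β, fun β hβ => hF0 β fun α _ => (c α).len_le.trans hβ⟩,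
    hFc, exists_lt_len_of_chain hlim hc⟩

theorem IsOutcome.of_le {x : SeqFull o v} (hd : IsOutcome d x) (hle : ∀ α < o, (c α).le (d α))
    (hc : ∀ β < o, ∃ α < o, β < (c α).len) : IsOutcome c x :=
  ⟨fun α hα β hβ => ((hle α hα).2 β hβ).trans (hd.1 α hα β (hβ.trans_le (hle α hα).1)), hc⟩

theorem resPlay_of_lt (p : Play o v) {α : Ordinal.{u}} (h : α < γ) : resPlay p γ α = p α :=
  if_pos h

theorem moveOK_resPlay {t m : SeqLT o v} {p : Play o v} :
    MoveOK t (resPlay p γ) γ m ↔ MoveOK t p γ m :=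
  and_congr_left' (forall₂_congr fun α hα => by rw [resPlay_of_lt p hα])

open Classical in
def legalize (t : SeqLT o v) (σ : Strat o v) : Strat o v := fun γ p =>
  if MoveOK t p γ (σ γ p) then σ γ p else @Classical.epsilon _ ⟨t⟩ (MoveOK t p γ)

theorem legalize_of_moveOK {t : SeqLT o v} {σ : Strat o v} {p : Play o v}
    (h : MoveOK t p γ (σ γ p)) : legalize t σ γ p = σ γ p :=
  if_pos h

theorem legalI_legalize {t : SeqLT o v} (σ : Strat o v)
    (h : ∀ γ < o, EvenOrd γ → ∀ p, IsPos t p γ → ∃ m, MoveOK t p γ m) :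
    LegalI t (legalize t σ) := by
  intro γ hγ he p hp
  by_cases hσ : MoveOK t p γ (σ γ p)
  · rwa [legalize_of_moveOK hσ]
  · rw [legalize, if_neg hσ]
    exact Classical.epsilon_spec (h γ hγ he p hp)

end Runs

theorem exists_moveOK_empty {κ : Cardinal.{u}} (hκ : κ.IsRegular) {γ : Ordinal.{u}}
    (hγ : γ < κ.ord) {p : Play κ.ord κ.ord} (hp : IsPos (SeqLT.empty κ.ord κ.ord) p γ) :
    ∃ m, MoveOK (SeqLT.empty κ.ord κ.ord) p γ m := by
  have hlim : IsSuccLimit κ.ord := Cardinal.isSuccLimit_ord hκ.aleph0_le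
  have hℓ : ⨆ α : Set.Iio γ, (p α).len < κ.ord := by
    apply lift_iSup_lt_of_lt_cof
    · rwa [← lift_cof, hκ.cof_ord, Cardinal.mk_Iio_ordinal, Cardinal.lift_lift,
        Cardinal.lift_lt, ← Cardinal.lt_ord]
    · exact fun α => (p α).len_lt.trans_eq (sup_eq_left.2 (one_le_iff_pos.2 hlim.pos))
  obtain ⟨m, hm⟩ := exists_forall_slt_of_chain hlim.pos (fun α β h h' => (hp.1 α β h h').1)
    (fun α hα => Ordinal.le_iSup (fun α : Set.Iio γ => (p α).len) ⟨α, hα⟩)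
    (lt_sup_of_lt_left (hlim.add_one_lt hℓ))
  exact ⟨m, hm, fun _ => m.empty_le⟩

section Tracking

variable {o : Ordinal.{u}} (T : Set (SeqSeq o × SeqSeq o))

structure IsNextNode (γ : Ordinal.{u}) (prev : ∀ α < γ, SeqSeq o × SeqSeq o) (m : SeqLT o o)
    (q : SeqSeq o × SeqSeq o) : Prop where
  mem : q ∈ T
  len_eq : q.1.len = γ + 1
  le_of_lt : ∀ α (h : α < γ), pairLe (prev α h) q
  le_val : m.le (q.1.val γ)

open Classical in
def moveII (p : Play o o) (γ : Ordinal.{u}) : SeqLT o o :=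
  if EvenOrd γ then SeqLT.empty o o else p γ

def trackNode (p : Play o o) (γ : Ordinal.{u}) : SeqSeq o × SeqSeq o :=
  Classical.epsilon (IsNextNode T γ (fun α _ => trackNode p α) (moveII p γ))
termination_by γ

def trackMove (p : Play o o) (γ : Ordinal.{u}) : SeqLT o o :=
  (trackNode T p γ).1.val γ

def trackWitness (p : Play o o) (γ : Ordinal.{u}) : SeqLT o o :=
  (trackNode T p γ).2.val γ

/-- `trackNode` is chosen by `Classical.epsilon`; `Tracks T p γ` says that the choice at stage `γ`
succeeded. -/
def Tracks (p : Play o o) (γ : Ordinal.{u}) : Prop :=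
  IsNextNode T γ (fun α _ => trackNode T p α) (moveII p γ) (trackNode T p γ)

-- On positions that do not follow it, the tracked node need not extend the moves played so far.
def treeStrategy : Strat o o :=
  legalize (SeqLT.empty o o) fun γ p => trackMove T p γ

variable {T} {p : Play o o} {γ : Ordinal.{u}}

theorem Tracks.of_exists
    (h : ∃ q, IsNextNode T γ (fun α _ => trackNode T p α) (moveII p γ) q) : Tracks T p γ := by
  have := Classical.epsilon_spec h
  rwa [← trackNode.eq_1] at this

theorem trackNode_congr {p p' : Play o o} :
    ∀ γ, (∀ α < γ, p α = p' α) → (¬EvenOrd γ → p γ = p' γ) →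
      trackNode T p γ = trackNode T p' γ := by
  intro γ
  induction γ using WellFoundedLT.induction with
  | _ γ IH =>
    intro hlt hγ
    have hII : moveII p γ = moveII p' γ := by
      by_cases he : EvenOrd γ
      · simp only [moveII, if_pos he]
      · simp only [moveII, if_neg he, hγ he]
    rw [trackNode.eq_1 T p γ, trackNode.eq_1 T p' γ, hII]
    congr 2
    funext α hα
    exact IH α hα (fun β hβ => hlt β (hβ.trans hα)) fun _ => hlt α hα

theorem trackNode_resPlay (he : EvenOrd γ) : trackNode T (resPlay p γ) γ = trackNode T p γ :=
  trackNode_congr γ (fun _ hα => resPlay_of_lt p hα) fun h => absurd he h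

variable {S : Set (SeqLT o o × SeqLT o o)} {α : Ordinal.{u}}

theorem Tracks.val_eq (hT : IsSTree S T) (hα : Tracks T p α) (hγ : Tracks T p γ) (hαγ : α < γ) :
    (trackNode T p γ).1.val α = trackMove T p α ∧
      (trackNode T p γ).2.val α = trackWitness T p α := by
  have hle := hγ.le_of_lt α hαγ
  have hlt : α < (trackNode T p α).1.len := hα.len_eq ▸ lt_add_one α
  exact ⟨(hle.1.2 α hlt).symm, (hle.2.2 α (hT.len_eq hα.mem ▸ hlt)).symm⟩

theorem Tracks.trackMove_slt (hT : IsSTree S T) (hα : Tracks T p α) (hγ : Tracks T p γ)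
    (hαγ : α < γ) : (trackMove T p α).slt (trackMove T p γ) := by
  rw [← (hα.val_eq hT hγ hαγ).1]
  exact hT.val_slt hγ.mem hαγ (hγ.len_eq ▸ lt_add_one γ)

theorem Tracks.ofFun_mem (hT : IsSTree S T) (hγo : γ < o) (hprev : ∀ α < γ, Tracks T p α)
    (hγ : Tracks T p γ) :
    (SeqSeq.ofFun o γ (trackMove T p), SeqSeq.ofFun o γ (trackWitness T p)) ∈ T := by
  have hγo' : γ < o ⊔ 1 := lt_sup_of_lt_left hγo
  rw [SeqSeq.ofFun_eq_res hγo' fun β hβ => ((hprev β hβ).val_eq hT hγ hβ).1.symm,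
    SeqSeq.ofFun_eq_res hγo' fun β hβ => ((hprev β hβ).val_eq hT hγ hβ).2.symm]
  exact hT.res_mem hγ.mem (hγ.len_eq ▸ (lt_add_one γ).le)

theorem tracks_of_evenOrd (hT : IsSTree S T) (hsc : Superclosed T) (hγ : γ < o) (he : EvenOrd γ)
    (hprev : ∀ α < γ, Tracks T p α) : Tracks T p γ := by
  obtain ⟨q, hq, hlen, hle⟩ := hT.exists_len_eq_add_one_of_chain hsc hγ (trackNode T p)
    (fun α hα => ⟨(hprev α hα).mem, (hprev α hα).len_eq⟩)
    fun α β hαβ hβ => (hprev β hβ).le_of_lt α hαβ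
  refine Tracks.of_exists ⟨q, hq, hlen, hle, ?_⟩
  rw [moveII, if_pos he]
  exact SeqLT.empty_le _

theorem tracks_add_one (hT : IsSTree S T) (hstrat : StrategicTree T) (hlim : IsSuccLimit o)
    {a : Ordinal.{u}} (ha : EvenOrd a) (hao : a + 1 < o) (haT : Tracks T p a)
    (hslt : (trackMove T p a).slt (p (a + 1))) : Tracks T p (a + 1) := by
  obtain ⟨w₁, w₂, hw, hmem⟩ := hstrat.2 _ haT.mem a ha haT.len_eq (p (a + 1)) hslt
  have h₁ : (trackNode T p a).1.len + 1 < o ⊔ 1 :=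
    haT.len_eq ▸ lt_sup_of_lt_left (hlim.add_one_lt hao)
  have h₂ : (trackNode T p a).2.len + 1 < o ⊔ 1 := hT.len_eq haT.mem ▸ h₁
  have hup : pairLe (trackNode T p a) ((trackNode T p a).1.snoc w₁, (trackNode T p a).2.snoc w₂) :=
    ⟨SeqSeq.le_snoc h₁, SeqSeq.le_snoc h₂⟩
  have htop : ((trackNode T p a).1.snoc w₁).val (a + 1) = w₁ :=
    haT.len_eq ▸ SeqSeq.snoc_val_len h₁
  refine Tracks.of_exists ⟨_, hmem, by rw [SeqSeq.snoc_len h₁, haT.len_eq], fun α hα => ?_, ?_⟩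
  · rcases (lt_add_one_iff.1 hα).lt_or_eq with hα | rfl
    · exact (haT.le_of_lt α hα).trans hup
    · exact hup
  · rw [moveII, if_neg fun h => evenOrd_add_one_iff.1 h ha, htop]
    exact hw

theorem eq_trackMove_of_followsI (hT : IsSTree S T) (hf : FollowsI (treeStrategy T) p o)
    (hγ : γ < o) (he : EvenOrd γ) (hγT : Tracks T p γ)
    (hbelow : ∀ α < γ, Tracks T p α ∧ (p α).le (trackMove T p α)) :
    p γ = trackMove T p γ := by
  have hmove : MoveOK (SeqLT.empty o o) p γ (trackMove T p γ) :=
    ⟨fun α hα => SeqLT.slt_of_le_of_slt (hbelow α hα).2 ((hbelow α hα).1.trackMove_slt hT hγT hα),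
      fun _ => SeqLT.empty_le _⟩
  have hres : trackMove T (resPlay p γ) γ = trackMove T p γ := by
    rw [trackMove, trackNode_resPlay he]
    rfl
  rw [hf γ hγ he, treeStrategy, legalize_of_moveOK] <;> rw [hres]
  exact moveOK_resPlay.2 hmove

theorem tracks_of_followsI (hT : IsSTree S T) (hstrat : StrategicTree T) (hlim : IsSuccLimit o)
    (hp : IsPos (SeqLT.empty o o) p o) (hf : FollowsI (treeStrategy T) p o) :
    ∀ γ < o, Tracks T p γ ∧ (p γ).le (trackMove T p γ) := by
  intro γ
  induction γ using WellFoundedLT.induction with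
  | _ γ IH =>
    intro hγ
    have hbelow : ∀ α < γ, Tracks T p α ∧ (p α).le (trackMove T p α) :=
      fun α hα => IH α hα (hα.trans hγ)
    by_cases he : EvenOrd γ
    · have hγT := tracks_of_evenOrd hT hstrat.1 hγ he fun α hα => (hbelow α hα).1
      exact ⟨hγT, eq_trackMove_of_followsI hT hf hγ he hγT hbelow ▸ SeqLT.le_refl _⟩
    · obtain ⟨a, rfl, ha⟩ := exists_eq_add_one_of_not_evenOrd he
      have hao : a < a + 1 := lt_add_one a
      have hpa := eq_trackMove_of_followsI hT hf (hao.trans hγ) ha (hbelow a hao).1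
        fun α hα => hbelow α (hα.trans hao)
      have hγT := tracks_add_one hT hstrat hlim ha hγ (hbelow a hao).1 (hpa ▸ hp.1 a _ hao hγ)
      have hle := hγT.le_val
      rw [moveII, if_neg he] at hle
      exact ⟨hγT, hle⟩

end Tracking

theorem statement12_general (κ : Cardinal.{u}) (hreg : κ.IsRegular)
    (S : Set (SeqLT κ.ord κ.ord × SeqLT κ.ord κ.ord))
    (T : Set (SeqSeq κ.ord × SeqSeq κ.ord))
    (hT : IsSTree S T) (hstrat : StrategicTree T) :
    WinIStrat (SeqLT.empty κ.ord κ.ord) (projTree T) := by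
  have hlim : IsSuccLimit κ.ord := Cardinal.isSuccLimit_ord hreg.aleph0_le
  refine ⟨treeStrategy T, legalI_legalize _ fun γ hγ _ p hp => exists_moveOK_empty hreg hγ hp,
    fun p hp hf => ?_⟩
  have htr := tracks_of_followsI hT hstrat hlim hp hf
  have hchain : ∀ α β, α < β → β < κ.ord → (trackMove T p α).slt (trackMove T p β) :=
    fun α β hαβ hβ => (htr α (hαβ.trans hβ)).1.trackMove_slt hT (htr β hβ).1 hαβ
  obtain ⟨x, hx⟩ := exists_isOutcome hlim hlim.pos hchain
  refine ⟨x, hx.of_le (fun α hα => (htr α hα).2) (exists_lt_len_of_chain hlim hp.1),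
    trackMove T p, trackWitness T p, fun γ hγ => ?_, hx⟩
  exact (htr γ hγ).1.ofFun_mem hT hγ fun α hα => (htr α (hα.trans hγ)).1

/-- For an uncountable regular cardinal `κ` with `κ^{<κ} = κ`, a perfect level subset `S` of
`Add(κ,1)²` and a strategic `S`-tree `T`: player I has a winning strategy in the
Banach–Mazur game `G_κ(p[T])` of length `κ`. -/
theorem statement12 (κ : Cardinal.{u}) (hreg : κ.IsRegular) (hunc : Cardinal.aleph0 < κ)
    (hpow : Cardinal.powerlt κ κ = κ)
    (S : Set (SeqLT κ.ord κ.ord × SeqLT κ.ord κ.ord))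
    (hlevel : IsLevelSubset S) (hperf : LevelPerfect S)
    (T : Set (SeqSeq κ.ord × SeqSeq κ.ord))
    (hT : IsSTree S T) (hstrat : StrategicTree T) :
    WinIStrat (SeqLT.empty κ.ord κ.ord) (projTree T) :=
  statement12_general κ hreg S T hT hstrat

end
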